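/- Let (p_k, q_k), k ∈ ℕ, be the integers determined by p_k + q_k·√10 = (3 + √10)^(k+1). Then for every odd k ≥ 1 and every integer h ≥ 0 one has (h·p_k)·(h·p_k + 3) − 10·(h·q_k)·(h·q_k + 1) = h·(h − p_{k−1}). In particular this quantity is negative for 0 < h < p_{k−1} and equals 0 for h = p_{k−1}. -/
import Mathlib

lemma irr10 : Irrational (Real.sqrt 10) := by
  rw [show ((10:ℝ)) = ((10:ℕ):ℝ) by norm_num, irrational_sqrt_natCast_iff]
  rintro ⟨r, hr⟩
  have h1 : r ≤ 3 ∨ 4 ≤ r := by omega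
  rcases h1 with h1 | h1 <;> nlinarith

lemma lin_indep (a b : ℤ) (h : (a : ℝ) + (b : ℝ) * Real.sqrt 10 = 0) :
    a = 0 ∧ b = 0 := by
  by_cases hb : b = 0
  · subst hb; simp at h; exact ⟨by exact_mod_cast h, rfl⟩
  · exfalso
    have : Real.sqrt 10 = (-a : ℝ) / b := by
      field_simp
      linarith
    have : Irrational ((-a : ℝ) / b) := this ▸ irr10
    rw [show ((-a:ℝ)/b) = ((((-a : ℚ)/b : ℚ)) : ℝ) by push_cast; ring] at this
    exact this ⟨_, rfl⟩

/-- Let `(p k, q k)` be determined by `p k + q k·√10 = (3 + √10)^(k+1)`. Then for every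
odd `k ≥ 1` and every integer `h ≥ 0` one has
`(h·p k)·(h·p k + 3) − 10·(h·q k)·(h·q k + 1) = h·(h − p (k−1))`. In particular this
quantity is negative for `0 < h < p (k−1)` and equals `0` for `h = p (k−1)`. -/
theorem stmt_13 (p q : ℕ → ℤ)
    (hpq : ∀ k : ℕ,
      (p k : ℝ) + (q k : ℝ) * Real.sqrt 10 = (3 + Real.sqrt 10) ^ (k + 1)) :
    ∀ k : ℕ, Odd k → 1 ≤ k → ∀ h : ℤ, 0 ≤ h →
      (h * p k) * (h * p k + 3) - 10 * ((h * q k) * (h * q k + 1))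
        = h * (h - p (k - 1)) ∧
      (0 < h → h < p (k - 1) →
        (h * p k) * (h * p k + 3) - 10 * ((h * q k) * (h * q k + 1)) < 0) ∧
      (h = p (k - 1) →
        (h * p k) * (h * p k + 3) - 10 * ((h * q k) * (h * q k + 1)) = 0) := by
  have hs : Real.sqrt 10 * Real.sqrt 10 = 10 :=
    Real.mul_self_sqrt (by norm_num)
  -- recurrence
  have hrec : ∀ k : ℕ, p (k + 1) = 3 * p k + 10 * q k ∧ q (k + 1) = p k + 3 * q k := by
    intro k
    have h1 := hpq k
    have h2 := hpq (k + 1)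
    have key : ((p (k+1) - (3 * p k + 10 * q k) : ℤ) : ℝ)
        + ((q (k+1) - (p k + 3 * q k) : ℤ) : ℝ) * Real.sqrt 10 = 0 := by
      push_cast
      have : ((p (k+1) : ℝ)) + (q (k+1) : ℝ) * Real.sqrt 10
          = (3 + Real.sqrt 10) * ((p k : ℝ) + (q k : ℝ) * Real.sqrt 10) := by
        rw [h1, h2]; ring
      linear_combination this + (q k : ℝ) * hs
    obtain ⟨e1, e2⟩ := lin_indep _ _ key
    constructor <;> omega
  -- base case
  have hbase : p 0 = 3 ∧ q 0 = 1 := by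
    have h0 := hpq 0
    have key : ((p 0 - 3 : ℤ) : ℝ) + ((q 0 - 1 : ℤ) : ℝ) * Real.sqrt 10 = 0 := by
      push_cast
      have : (3 + Real.sqrt 10) ^ (0 + 1) = 3 + Real.sqrt 10 := by ring
      rw [this] at h0
      linarith
    obtain ⟨e1, e2⟩ := lin_indep _ _ key
    constructor <;> omega
  -- norm
  have hnorm : ∀ k : ℕ, p k ^ 2 - 10 * q k ^ 2 = (-1) ^ (k + 1) := by
    intro k
    induction k with
    | zero => rw [hbase.1, hbase.2]; norm_num
    | succ n ih =>
      obtain ⟨e1, e2⟩ := hrec n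
      rw [e1, e2, pow_succ]
      linear_combination (-1 : ℤ) * ih
  intro k hk hk1 h hh
  obtain ⟨m, rfl⟩ : ∃ m, k = m + 1 := ⟨k - 1, by omega⟩
  have hm : (m + 1) - 1 = m := rfl
  obtain ⟨e1, e2⟩ := hrec m
  have hn : p (m+1) ^ 2 - 10 * q (m+1) ^ 2 = 1 := by
    rw [hnorm (m+1)]
    obtain ⟨j, hj⟩ := hk
    have : m + 1 + 1 = 2 * (j + 1) := by omega
    rw [this, pow_mul]; norm_num
  have main : (h * p (m+1)) * (h * p (m+1) + 3) - 10 * ((h * q (m+1)) * (h * q (m+1) + 1))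
      = h * (h - p m) := by
    have h3 : 3 * p (m+1) - 10 * q (m+1) = -p m := by rw [e1, e2]; ring
    linear_combination h ^ 2 * hn + h * h3
  rw [hm]
  refine ⟨main, ?_, ?_⟩
  · intro hpos hlt
    rw [main]
    exact mul_neg_of_pos_of_neg hpos (by omega)
  · intro heq
    rw [main, heq]; ring
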